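/- arXiv:1412.6722 — 3 statements merged into one kernel-verified Lean document; each statement's English description precedes it below -/
import Mathlib

section
/- In a finite 2-player game, if s is an α-PCE and s* is a Nash equilibrium, then for each player i, U_i(s) ≥ α + U_i(s*). -/
open scoped BigOperators

section GameDefs

variable {A1 A2 : Type} [Fintype A1] [Fintype A2]

/-- A mixed strategy over a finite action set: nonnegative weights summing to 1. -/
def IsMixed {A : Type} [Fintype A] (s : A → ℝ) : Prop :=
  (∀ a, 0 ≤ s a) ∧ ∑ a, s a = 1

/-- Expected utility of a utility function `u` under mixed strategies `s1`, `s2`. -/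
noncomputable def EU (u : A1 → A2 → ℝ) (s1 : A1 → ℝ) (s2 : A2 → ℝ) : ℝ :=
  ∑ a1, ∑ a2, s1 a1 * s2 a2 * u a1 a2

/-- `s2` is a best response of player 2 (with utility `u2`) to `s1`. -/
def IsBR2 (u2 : A1 → A2 → ℝ) (s1 : A1 → ℝ) (s2 : A2 → ℝ) : Prop :=
  IsMixed s2 ∧ ∀ t2, IsMixed t2 → EU u2 s1 t2 ≤ EU u2 s1 s2

/-- `s1` is a best response of player 1 (with utility `u1`) to `s2`. -/
def IsBR1 (u1 : A1 → A2 → ℝ) (s2 : A2 → ℝ) (s1 : A1 → ℝ) : Prop :=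
  IsMixed s1 ∧ ∀ t1, IsMixed t1 → EU u1 t1 s2 ≤ EU u1 s1 s2

/-- `BU1`: the best utility player 1 can obtain if player 2 best responds. -/
noncomputable def BU1 (u1 u2 : A1 → A2 → ℝ) : ℝ :=
  sSup {x | ∃ s1 s2, IsMixed s1 ∧ IsBR2 u2 s1 s2 ∧ x = EU u1 s1 s2}

/-- `BU2`: the best utility player 2 can obtain if player 1 best responds. -/
noncomputable def BU2 (u1 u2 : A1 → A2 → ℝ) : ℝ :=
  sSup {x | ∃ s1 s2, IsMixed s2 ∧ IsBR1 u1 s2 s1 ∧ x = EU u2 s1 s2}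

/-- A (mixed) strategy profile. -/
def IsProfile (s : (A1 → ℝ) × (A2 → ℝ)) : Prop := IsMixed s.1 ∧ IsMixed s.2

/-- Perfect cooperative equilibrium. -/
def IsPCE (u1 u2 : A1 → A2 → ℝ) (s : (A1 → ℝ) × (A2 → ℝ)) : Prop :=
  IsProfile s ∧ BU1 u1 u2 ≤ EU u1 s.1 s.2 ∧ BU2 u1 u2 ≤ EU u2 s.1 s.2

/-- Nash equilibrium. -/
def IsNE (u1 u2 : A1 → A2 → ℝ) (s : (A1 → ℝ) × (A2 → ℝ)) : Prop :=
  IsBR1 u1 s.2 s.1 ∧ IsBR2 u2 s.1 s.2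

/-- `s` Pareto dominates `s'`. -/
def ParetoDom (u1 u2 : A1 → A2 → ℝ) (s s' : (A1 → ℝ) × (A2 → ℝ)) : Prop :=
  EU u1 s'.1 s'.2 ≤ EU u1 s.1 s.2 ∧ EU u2 s'.1 s'.2 ≤ EU u2 s.1 s.2

/-- `s` strongly Pareto dominates `s'`. -/
def StrongParetoDom (u1 u2 : A1 → A2 → ℝ) (s s' : (A1 → ℝ) × (A2 → ℝ)) : Prop :=
  ParetoDom u1 u2 s s' ∧
    (EU u1 s'.1 s'.2 < EU u1 s.1 s.2 ∨ EU u2 s'.1 s'.2 < EU u2 s.1 s.2)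

/-- α-perfect cooperative equilibrium. -/
def IsAlphaPCE (u1 u2 : A1 → A2 → ℝ) (α : ℝ) (s : (A1 → ℝ) × (A2 → ℝ)) : Prop :=
  IsProfile s ∧ α + BU1 u1 u2 ≤ EU u1 s.1 s.2 ∧ α + BU2 u1 u2 ≤ EU u2 s.1 s.2

/-- Max-PCE: an α-PCE such that no α'-PCE exists for α' > α. -/
def IsMPCE (u1 u2 : A1 → A2 → ℝ) (s : (A1 → ℝ) × (A2 → ℝ)) : Prop :=
  ∃ α, IsAlphaPCE u1 u2 α s ∧ ∀ α' s', IsAlphaPCE u1 u2 α' s' → α' ≤ α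

/-- Cooperative equilibrium: every deviation is either unprofitable when the other
player best responds, or leaves the other player strictly worse off no matter what,
in which case the other player can punish. -/
def IsCE (u1 u2 : A1 → A2 → ℝ) (s : (A1 → ℝ) × (A2 → ℝ)) : Prop :=
  IsProfile s ∧
  (∀ s1', IsMixed s1' →
    (sSup {x | ∃ s2', IsBR2 u2 s1' s2' ∧ x = EU u1 s1' s2'} ≤ EU u1 s.1 s.2) ∨
    (sSup {x | ∃ s2', IsMixed s2' ∧ x = EU u2 s1' s2'} < EU u2 s.1 s.2 ∧
      ∃ s2', IsMixed s2' ∧ EU u1 s1' s2' ≤ EU u1 s.1 s.2)) ∧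
  (∀ s2', IsMixed s2' →
    (sSup {x | ∃ s1', IsBR1 u1 s2' s1' ∧ x = EU u2 s1' s2'} ≤ EU u2 s.1 s.2) ∨
    (sSup {x | ∃ s1', IsMixed s1' ∧ x = EU u1 s1' s2'} < EU u1 s.1 s.2 ∧
      ∃ s1', IsMixed s1' ∧ EU u2 s1' s2' ≤ EU u2 s.1 s.2))

end GameDefs


lemma EU_le_bound {A1 A2 : Type} [Fintype A1] [Fintype A2]
    (u : A1 → A2 → ℝ) (s1 : A1 → ℝ) (s2 : A2 → ℝ)
    (h1 : IsMixed s1) (h2 : IsMixed s2) :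
    EU u s1 s2 ≤ ∑ a1, ∑ a2, |u a1 a2| := by
  unfold EU
  apply Finset.sum_le_sum; intro a1 _
  apply Finset.sum_le_sum; intro a2 _
  have hs1 : s1 a1 ≤ 1 := by
    calc s1 a1 ≤ ∑ a, s1 a := Finset.single_le_sum (fun a _ => h1.1 a) (Finset.mem_univ a1)
    _ = 1 := h1.2
  have hs2 : s2 a2 ≤ 1 := by
    calc s2 a2 ≤ ∑ a, s2 a := Finset.single_le_sum (fun a _ => h2.1 a) (Finset.mem_univ a2)
    _ = 1 := h2.2
  have : s1 a1 * s2 a2 ≤ 1 := by nlinarith [h1.1 a1, h2.1 a2]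
  calc s1 a1 * s2 a2 * u a1 a2 ≤ s1 a1 * s2 a2 * |u a1 a2| := by
        apply mul_le_mul_of_nonneg_left (le_abs_self _) (mul_nonneg (h1.1 a1) (h2.1 a2))
    _ ≤ 1 * |u a1 a2| := by
        apply mul_le_mul_of_nonneg_right this (abs_nonneg _)
    _ = |u a1 a2| := one_mul _

/-- if `s` is an α-PCE and `s*` a Nash equilibrium, then each player
gets at least α more in `s` than in `s*`. -/
theorem alphaPCE_ge_ne {A1 A2 : Type} [Fintype A1] [Fintype A2]
    (u1 u2 : A1 → A2 → ℝ) (α : ℝ) (s sstar : (A1 → ℝ) × (A2 → ℝ))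
    (hs : IsAlphaPCE u1 u2 α s) (hstar : IsNE u1 u2 sstar) :
    α + EU u1 sstar.1 sstar.2 ≤ EU u1 s.1 s.2 ∧
    α + EU u2 sstar.1 sstar.2 ≤ EU u2 s.1 s.2 := by
  obtain ⟨hprof, h1, h2⟩ := hs
  obtain ⟨hbr1, hbr2⟩ := hstar
  have hm1 : IsMixed sstar.1 := hbr1.1
  have hm2 : IsMixed sstar.2 := hbr2.1
  have hb1 : BddAbove {x | ∃ s1 s2, IsMixed s1 ∧ IsBR2 u2 s1 s2 ∧ x = EU u1 s1 s2} := by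
    refine ⟨∑ a1, ∑ a2, |u1 a1 a2|, ?_⟩
    rintro x ⟨t1, t2, ht1, ht2, rfl⟩
    exact EU_le_bound u1 t1 t2 ht1 ht2.1
  have hb2 : BddAbove {x | ∃ s1 s2, IsMixed s2 ∧ IsBR1 u1 s2 s1 ∧ x = EU u2 s1 s2} := by
    refine ⟨∑ a1, ∑ a2, |u2 a1 a2|, ?_⟩
    rintro x ⟨t1, t2, ht2, ht1, rfl⟩
    exact EU_le_bound u2 t1 t2 ht1.1 ht2
  have hle1 : EU u1 sstar.1 sstar.2 ≤ BU1 u1 u2 :=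
    le_csSup hb1 ⟨sstar.1, sstar.2, hm1, hbr2, rfl⟩
  have hle2 : EU u2 sstar.1 sstar.2 ≤ BU2 u1 u2 :=
    le_csSup hb2 ⟨sstar.1, sstar.2, hm2, hbr1, rfl⟩
  exact ⟨by linarith, by linarith⟩
end

section
/- In Prisoner's Dilemma, (Cooperate, Cooperate) is the unique M-PCE, and it is a 2-PCE. -/
open scoped BigOperators

/-- The point-mass (pure) strategy on action `a`. -/
def pt {A : Type} [DecidableEq A] (a : A) : A → ℝ := fun b => if b = a then 1 else 0

/-- Actions in Prisoner's Dilemma. -/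
inductive PD | C | D
  deriving DecidableEq

instance instFintypePD : Fintype PD :=
  ⟨{PD.C, PD.D}, fun x => by cases x <;> simp⟩

/-- Player 1's payoffs in Prisoner's Dilemma. -/
def pdU1 : PD → PD → ℝ
  | PD.C, PD.C => 3
  | PD.C, PD.D => 0
  | PD.D, PD.C => 5
  | PD.D, PD.D => 1

/-- Player 2's payoffs in Prisoner's Dilemma. -/
def pdU2 : PD → PD → ℝ
  | PD.C, PD.C => 3
  | PD.C, PD.D => 5
  | PD.D, PD.C => 0
  | PD.D, PD.D => 1

/-! Defection strictly dominates cooperation, so the only best response to any mixed strategy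
is the pure strategy `D`; hence `BU₁ = BU₂ = max (u₁ (C, D)) (u₁ (D, D)) = 1`. An α-PCE gives the
players a total payoff of at least `2α + 2`, while the total payoff is at most `6`, attained only
at `(C, C)`. So `α ≤ 2`, and `α = 2` forces the profile `(C, C)`, which gives each player
`3 = 2 + 1`. -/

open Finset

section Mixed

variable {A : Type} [Fintype A]

theorem isMixed_pt [DecidableEq A] (a : A) : IsMixed (pt a) :=
  ⟨fun b => by unfold pt; split_ifs <;> norm_num, by simp [pt]⟩

theorem sum_pt_mul [DecidableEq A] (a : A) (f : A → ℝ) : ∑ b, pt a b * f b = f a := by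
  simp [pt]

namespace IsMixed

variable {s f : A → ℝ} {M : ℝ}

theorem sum_mul_le (hs : IsMixed s) (hf : ∀ a, f a ≤ M) : ∑ a, s a * f a ≤ M :=
  calc ∑ a, s a * f a ≤ ∑ a, s a * M :=
        sum_le_sum fun a _ => mul_le_mul_of_nonneg_left (hf a) (hs.1 a)
    _ = M := by rw [← sum_mul, hs.2, one_mul]

theorem sum_mul_lt (hs : IsMixed s) (hf : ∀ a, f a < M) : ∑ a, s a * f a < M := by
  obtain ⟨a, -, ha⟩ : ∃ a ∈ univ, (0 : ℝ) < s a :=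
    exists_lt_of_sum_lt (by simp [hs.2])
  calc ∑ a, s a * f a < ∑ a, s a * M :=
        sum_lt_sum (fun a _ => mul_le_mul_of_nonneg_left (hf a).le (hs.1 a))
          ⟨a, mem_univ a, mul_lt_mul_of_pos_left (hf a) ha⟩
    _ = M := by rw [← sum_mul, hs.2, one_mul]

theorem eq_pt_of_le_sum_mul [DecidableEq A] (hs : IsMixed s) (hf : ∀ a, f a ≤ M) (a₀ : A)
    (hlt : ∀ a ≠ a₀, f a < M) (hM : M ≤ ∑ a, s a * f a) : s = pt a₀ := by
  have hgap : ∑ a, s a * (M - f a) = 0 := by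
    refine le_antisymm ?_ (sum_nonneg fun a _ => mul_nonneg (hs.1 a) (sub_nonneg.2 (hf a)))
    calc ∑ a, s a * (M - f a) = M - ∑ a, s a * f a := by
          simp only [mul_sub, sum_sub_distrib, ← sum_mul, hs.2, one_mul]
      _ ≤ 0 := sub_nonpos.2 hM
  have hzero : ∀ a ≠ a₀, s a = 0 := fun a ha =>
    (mul_eq_zero.1 ((sum_eq_zero_iff_of_nonneg fun a _ =>
      mul_nonneg (hs.1 a) (sub_nonneg.2 (hf a))).1 hgap a (mem_univ a))).resolve_right
      (sub_pos.2 (hlt a ha)).ne'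
  have hone : s a₀ = 1 := by
    rw [← hs.2, sum_eq_single a₀ (fun a _ ha => hzero a ha) (by simp)]
  funext a
  by_cases ha : a = a₀
  · simp [pt, ha, hone]
  · simp [pt, ha, hzero a ha]

end IsMixed

end Mixed

section ExpectedUtility

variable {A1 A2 : Type} [Fintype A1] [Fintype A2] {u : A1 → A2 → ℝ} {s1 : A1 → ℝ}
  {s2 : A2 → ℝ} {M : ℝ}

theorem EU_eq_sum_mul_sum (u : A1 → A2 → ℝ) (s1 : A1 → ℝ) (s2 : A2 → ℝ) :
    EU u s1 s2 = ∑ a, s1 a * ∑ b, s2 b * u a b := by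
  simp only [EU, mul_sum, mul_assoc]

theorem EU_flip (u : A1 → A2 → ℝ) (s1 : A1 → ℝ) (s2 : A2 → ℝ) :
    EU (flip u) s2 s1 = EU u s1 s2 := by
  unfold EU flip
  rw [sum_comm]
  simp only [mul_comm (s2 _)]

theorem EU_eq_sum_mul_sum_right (u : A1 → A2 → ℝ) (s1 : A1 → ℝ) (s2 : A2 → ℝ) :
    EU u s1 s2 = ∑ b, s2 b * ∑ a, s1 a * u a b := by
  rw [← EU_flip, EU_eq_sum_mul_sum]
  rfl

theorem EU_add (u v : A1 → A2 → ℝ) (s1 : A1 → ℝ) (s2 : A2 → ℝ) :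
    EU (u + v) s1 s2 = EU u s1 s2 + EU v s1 s2 := by
  simp only [EU, Pi.add_apply, mul_add, sum_add_distrib]

theorem EU_pt_right [DecidableEq A2] (u : A1 → A2 → ℝ) (s1 : A1 → ℝ) (b : A2) :
    EU u s1 (pt b) = ∑ a, s1 a * u a b := by
  simp only [EU_eq_sum_mul_sum, sum_pt_mul]

theorem EU_pt_pt [DecidableEq A1] [DecidableEq A2] (u : A1 → A2 → ℝ) (a : A1) (b : A2) :
    EU u (pt a) (pt b) = u a b := by
  rw [EU_pt_right, sum_pt_mul]

theorem EU_le_of_forall_le (hs1 : IsMixed s1) (hs2 : IsMixed s2) (hu : ∀ a b, u a b ≤ M) :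
    EU u s1 s2 ≤ M := by
  rw [EU_eq_sum_mul_sum]
  exact hs1.sum_mul_le fun a => hs2.sum_mul_le (hu a)

theorem eq_pt_left_of_le_EU [DecidableEq A1] (hs1 : IsMixed s1) (hs2 : IsMixed s2)
    (hu : ∀ a b, u a b ≤ M) {a₀ : A1} (hlt : ∀ a b, a ≠ a₀ → u a b < M)
    (hM : M ≤ EU u s1 s2) : s1 = pt a₀ := by
  rw [EU_eq_sum_mul_sum] at hM
  exact hs1.eq_pt_of_le_sum_mul (fun a => hs2.sum_mul_le (hu a)) a₀
    (fun a ha => hs2.sum_mul_lt fun b => hlt a b ha) hM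

theorem eq_pt_of_le_EU [DecidableEq A1] [DecidableEq A2] (hs1 : IsMixed s1) (hs2 : IsMixed s2)
    (hu : ∀ a b, u a b ≤ M) {a₀ : A1} {b₀ : A2} (hlt : ∀ a b, (a, b) ≠ (a₀, b₀) → u a b < M)
    (hM : M ≤ EU u s1 s2) : s1 = pt a₀ ∧ s2 = pt b₀ :=
  ⟨eq_pt_left_of_le_EU hs1 hs2 hu (fun a b ha => hlt a b (by simp [ha])) hM,
    eq_pt_left_of_le_EU (u := flip u) hs2 hs1 (fun b a => hu a b)
      (fun b a hb => hlt a b (by simp [hb])) (by rwa [EU_flip])⟩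

end ExpectedUtility

section BestResponse

variable {A1 A2 : Type}

def IsStrictlyDominant2 (u2 : A1 → A2 → ℝ) (d : A2) : Prop :=
  ∀ a b, b ≠ d → u2 a b < u2 a d

variable [Fintype A1] {u1 u2 : A1 → A2 → ℝ} {s1 : A1 → ℝ} {s2 : A2 → ℝ}

namespace IsStrictlyDominant2

variable {d : A2}

theorem sum_mul_lt (hd : IsStrictlyDominant2 u2 d) (hs1 : IsMixed s1) {b : A2} (hb : b ≠ d) :
    ∑ a, s1 a * u2 a b < ∑ a, s1 a * u2 a d := by
  have h := hs1.sum_mul_lt (f := fun a => u2 a b - u2 a d) (M := 0)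
    fun a => sub_neg.2 (hd a b hb)
  simpa only [mul_sub, sum_sub_distrib, sub_neg] using h

theorem sum_mul_le (hd : IsStrictlyDominant2 u2 d) (hs1 : IsMixed s1) (b : A2) :
    ∑ a, s1 a * u2 a b ≤ ∑ a, s1 a * u2 a d := by
  rcases eq_or_ne b d with rfl | hb
  · exact le_rfl
  · exact (hd.sum_mul_lt hs1 hb).le

variable [Fintype A2] [DecidableEq A2]

theorem isBR2_pt (hd : IsStrictlyDominant2 u2 d) (hs1 : IsMixed s1) : IsBR2 u2 s1 (pt d) := by
  refine ⟨isMixed_pt d, fun t2 ht2 => ?_⟩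
  rw [EU_pt_right, EU_eq_sum_mul_sum_right]
  exact ht2.sum_mul_le (hd.sum_mul_le hs1)

theorem eq_pt_of_isBR2 (hd : IsStrictlyDominant2 u2 d) (hs1 : IsMixed s1)
    (hbr : IsBR2 u2 s1 s2) : s2 = pt d := by
  have h := hbr.2 (pt d) (isMixed_pt d)
  rw [EU_pt_right, EU_eq_sum_mul_sum_right] at h
  exact hbr.1.eq_pt_of_le_sum_mul (hd.sum_mul_le hs1) d (fun b hb => hd.sum_mul_lt hs1 hb) h

theorem BU1_eq [DecidableEq A1] (hd : IsStrictlyDominant2 u2 d) {a₀ : A1}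
    (ha₀ : ∀ a, u1 a d ≤ u1 a₀ d) : BU1 u1 u2 = u1 a₀ d := by
  refine IsGreatest.csSup_eq ⟨⟨pt a₀, pt d, isMixed_pt a₀, hd.isBR2_pt (isMixed_pt a₀),
    (EU_pt_pt u1 a₀ d).symm⟩, ?_⟩
  rintro x ⟨s1, s2, hs1, hbr, rfl⟩
  rw [hd.eq_pt_of_isBR2 hs1 hbr, EU_pt_right]
  exact hs1.sum_mul_le ha₀

end IsStrictlyDominant2

variable [Fintype A2]

theorem isBR2_flip_iff : IsBR2 (flip u1) s2 s1 ↔ IsBR1 u1 s2 s1 := by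
  simp only [IsBR2, IsBR1, EU_flip]

theorem BU2_eq_BU1_flip (u1 u2 : A1 → A2 → ℝ) : BU2 u1 u2 = BU1 (flip u2) (flip u1) := by
  simp only [BU2, BU1, isBR2_flip_iff, EU_flip]
  exact congrArg sSup (Set.ext fun _ => exists_comm)

theorem IsAlphaPCE.two_mul_add_le {α : ℝ} {s : (A1 → ℝ) × (A2 → ℝ)}
    (h : IsAlphaPCE u1 u2 α s) : 2 * α + BU1 u1 u2 + BU2 u1 u2 ≤ EU (u1 + u2) s.1 s.2 := by
  obtain ⟨-, h1, h2⟩ := h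
  rw [EU_add]
  linarith

end BestResponse

section PrisonersDilemma

theorem flip_pdU1 : flip pdU1 = pdU2 := by
  funext b a
  cases a <;> cases b <;> rfl

theorem flip_pdU2 : flip pdU2 = pdU1 := by
  funext b a
  cases a <;> cases b <;> rfl

theorem pdU2_isStrictlyDominant2_D : IsStrictlyDominant2 pdU2 PD.D := by
  rintro (_ | _) (_ | _) h <;> first | exact absurd rfl h | norm_num [pdU2]

theorem BU1_pd : BU1 pdU1 pdU2 = 1 :=
  pdU2_isStrictlyDominant2_D.BU1_eq (a₀ := PD.D) (by rintro (_ | _) <;> norm_num [pdU1])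

theorem BU2_pd : BU2 pdU1 pdU2 = 1 := by
  rw [BU2_eq_BU1_flip, flip_pdU1, flip_pdU2, BU1_pd]

theorem pd_welfare_le (a b : PD) : (pdU1 + pdU2) a b ≤ 6 := by
  cases a <;> cases b <;> norm_num [pdU1, pdU2]

theorem pd_welfare_lt (a b : PD) (h : (a, b) ≠ (PD.C, PD.C)) : (pdU1 + pdU2) a b < 6 := by
  cases a <;> cases b <;> first | exact absurd rfl h | norm_num [pdU1, pdU2]

theorem pd_isAlphaPCE_two : IsAlphaPCE pdU1 pdU2 2 (pt PD.C, pt PD.C) :=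
  ⟨⟨isMixed_pt _, isMixed_pt _⟩, by norm_num [BU1_pd, EU_pt_pt, pdU1],
    by norm_num [BU2_pd, EU_pt_pt, pdU2]⟩

theorem pd_le_two_of_isAlphaPCE {α : ℝ} {s : (PD → ℝ) × (PD → ℝ)}
    (h : IsAlphaPCE pdU1 pdU2 α s) : α ≤ 2 := by
  have hsurplus := h.two_mul_add_le
  have hwelfare := EU_le_of_forall_le h.1.1 h.1.2 pd_welfare_le
  rw [BU1_pd, BU2_pd] at hsurplus
  linarith

end PrisonersDilemma

/-- in Prisoner's Dilemma, (C,C) is the unique M-PCE and is a 2-PCE. -/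
theorem pd_mpce :
    IsMPCE pdU1 pdU2 (pt PD.C, pt PD.C) ∧
    IsAlphaPCE pdU1 pdU2 2 (pt PD.C, pt PD.C) ∧
    (∀ s, IsMPCE pdU1 pdU2 s → s = (pt PD.C, pt PD.C)) := by
  refine ⟨⟨2, pd_isAlphaPCE_two, fun _ _ => pd_le_two_of_isAlphaPCE⟩, pd_isAlphaPCE_two, ?_⟩
  rintro ⟨s1, s2⟩ ⟨α, hα, hmax⟩
  have hα2 : α = 2 := le_antisymm (pd_le_two_of_isAlphaPCE hα) (hmax 2 _ pd_isAlphaPCE_two)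
  have hwelfare : 6 ≤ EU (pdU1 + pdU2) s1 s2 := by
    have hsurplus := hα.two_mul_add_le
    rw [BU1_pd, BU2_pd, hα2] at hsurplus
    linarith
  obtain ⟨rfl, rfl⟩ := eq_pt_of_le_EU hα.1.1 hα.1.2 pd_welfare_le pd_welfare_lt hwelfare
  rfl
end

section
/- For any 2-player game G, the game G* with side payments extending G has a unique M-PCE value, equal to ((MSW(G) + mm_1(G) − mm_2(G))/2, (MSW(G) − mm_1(G) + mm_2(G))/2). -/
open scoped BigOperators Classical

section FGameDefs

/-- A mixed strategy (finitely supported) over a possibly infinite action set. -/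
def IsMixedF {A : Type} (s : A →₀ ℝ) : Prop :=
  (∀ a, 0 ≤ s a) ∧ s.sum (fun _ x => x) = 1

/-- Expected utility under finitely-supported mixed strategies. -/
noncomputable def EUF {A B : Type} (u : A → B → ℝ) (s1 : A →₀ ℝ) (s2 : B →₀ ℝ) : ℝ :=
  s1.sum fun a p => s2.sum fun b q => p * q * u a b

/-- `s2` is a best response of player 2 (utility `u2`) to `s1`. -/
def IsBR2F {A B : Type} (u2 : A → B → ℝ) (s1 : A →₀ ℝ) (s2 : B →₀ ℝ) : Prop :=
  IsMixedF s2 ∧ ∀ t2, IsMixedF t2 → EUF u2 s1 t2 ≤ EUF u2 s1 s2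

/-- `s1` is a best response of player 1 (utility `u1`) to `s2`. -/
def IsBR1F {A B : Type} (u1 : A → B → ℝ) (s2 : B →₀ ℝ) (s1 : A →₀ ℝ) : Prop :=
  IsMixedF s1 ∧ ∀ t1, IsMixedF t1 → EUF u1 t1 s2 ≤ EUF u1 s1 s2

/-- Best utility for player 1 when player 2 best responds. -/
noncomputable def BU1F {A B : Type} (u1 u2 : A → B → ℝ) : ℝ :=
  sSup {x | ∃ s1 s2, IsMixedF s1 ∧ IsBR2F u2 s1 s2 ∧ x = EUF u1 s1 s2}

/-- Best utility for player 2 when player 1 best responds. -/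
noncomputable def BU2F {A B : Type} (u1 u2 : A → B → ℝ) : ℝ :=
  sSup {x | ∃ s1 s2, IsMixedF s2 ∧ IsBR1F u1 s2 s1 ∧ x = EUF u2 s1 s2}

/-- α-PCE in the finitely-supported setting. -/
def IsAlphaPCEF {A B : Type} (u1 u2 : A → B → ℝ) (α : ℝ) (s : (A →₀ ℝ) × (B →₀ ℝ)) : Prop :=
  IsMixedF s.1 ∧ IsMixedF s.2 ∧
    α + BU1F u1 u2 ≤ EUF u1 s.1 s.2 ∧ α + BU2F u1 u2 ≤ EUF u2 s.1 s.2

/-- Max-PCE in the finitely-supported setting. -/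
def IsMPCEF {A B : Type} (u1 u2 : A → B → ℝ) (s : (A →₀ ℝ) × (B →₀ ℝ)) : Prop :=
  ∃ α, IsAlphaPCEF u1 u2 α s ∧ ∀ α' s', IsAlphaPCEF u1 u2 α' s' → α' ≤ α

/-- Maximum social welfare over pure action profiles. -/
noncomputable def MSWF {A B : Type} (u1 u2 : A → B → ℝ) : ℝ :=
  sSup {x | ∃ a b, x = u1 a b + u2 a b}

/-- Player 1's minimax value. -/
noncomputable def mm1F {A B : Type} (u : A → B → ℝ) : ℝ :=
  sInf {x | ∃ s2, IsMixedF s2 ∧ x = sSup {y | ∃ s1, IsMixedF s1 ∧ y = EUF u s1 s2}}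

/-- Player 2's minimax value. -/
noncomputable def mm2F {A B : Type} (u : A → B → ℝ) : ℝ :=
  sInf {x | ∃ s1, IsMixedF s1 ∧ x = sSup {y | ∃ s2, IsMixedF s2 ∧ y = EUF u s1 s2}}

/-- Actions of the side-payment extension: original actions plus deal actions
`(a, r, backup)` proposing action profile `a` with transfer `r` from player 1 to
player 2, and backup action if the deal is not matched. -/
def SPAct (A1 A2 Ai : Type) : Type := Ai ⊕ (A1 × A2) × ℝ × Ai

/-- Player 1's utility in the side-payment extension. -/
noncomputable def uStar1 {A1 A2 : Type} (u1 : A1 → A2 → ℝ) :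
    SPAct A1 A2 A1 → SPAct A1 A2 A2 → ℝ
  | Sum.inl b1, Sum.inl b2 => u1 b1 b2
  | Sum.inl b1, Sum.inr (_, _, b2) => u1 b1 b2
  | Sum.inr (_, _, b1), Sum.inl b2 => u1 b1 b2
  | Sum.inr (d1, r1, b1), Sum.inr (d2, r2, b2) =>
      if d1 = d2 ∧ r1 = r2 then u1 d1.1 d1.2 - r1 else u1 b1 b2

/-- Player 2's utility in the side-payment extension. -/
noncomputable def uStar2 {A1 A2 : Type} (u2 : A1 → A2 → ℝ) :
    SPAct A1 A2 A1 → SPAct A1 A2 A2 → ℝ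
  | Sum.inl b1, Sum.inl b2 => u2 b1 b2
  | Sum.inl b1, Sum.inr (_, _, b2) => u2 b1 b2
  | Sum.inr (_, _, b1), Sum.inl b2 => u2 b1 b2
  | Sum.inr (d1, r1, b1), Sum.inr (d2, r2, b2) =>
      if d1 = d2 ∧ r1 = r2 then u2 d1.1 d1.2 + r1 else u2 b1 b2

end FGameDefs

/-!
Payoffs in `G*` always add up to at most `MSW(G)`, so an `α`-PCE forces
`2α + BU₁ + BU₂ ≤ MSW(G)`. Player 2 may ignore every deal and play `G`, so any best response
earns her at least `mm₂(G)`, whence `BU₁ ≤ MSW(G) - mm₂(G)`. Conversely player 1 can propose a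
welfare-maximising deal whose transfer leaves player 2 exactly `mm₂(G) + ε`, backed by an
`ε`-minimax threat of `G`; accepting is then a best response, so `BU₁ = MSW(G) - mm₂(G)`, and
transposing the game gives `BU₂ = MSW(G) - mm₁(G)`. A matched deal realises every split of
`MSW(G)`, in particular the one for `α = (mm₁(G) + mm₂(G) - MSW(G)) / 2`; at this `α` the two
PCE inequalities and the welfare bound pin down both payoffs.
-/

open Finsupp

section MixedStrategies

variable {A B X Y : Type}

lemma isMixedF_single (a : A) : IsMixedF (single a (1 : ℝ)) :=
  ⟨fun x => by rw [single_apply]; split_ifs <;> norm_num, by simp [sum_single_index]⟩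

lemma IsMixedF.mapDomain {s : A →₀ ℝ} (hs : IsMixedF s) (f : A → X) :
    IsMixedF (s.mapDomain f) := by
  refine ⟨fun x => ?_, ?_⟩
  · rw [Finsupp.mapDomain, Finsupp.sum_apply]
    exact Finset.sum_nonneg fun a _ => by simp only [single_apply]; split_ifs <;> simp [hs.1 a]
  · rw [sum_mapDomain_index (fun _ => rfl) fun _ _ _ => rfl]
    exact hs.2

lemma IsMixedF.sum_mul_const {s : A →₀ ℝ} (hs : IsMixedF s) (c : ℝ) :
    (s.sum fun _ p => p * c) = c := by
  rw [← sum_mul, hs.2, one_mul]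

lemma IsMixedF.sum_mul_le {s : A →₀ ℝ} (hs : IsMixedF s) {g : A → ℝ} {c : ℝ}
    (h : ∀ a, g a ≤ c) : (s.sum fun a p => p * g a) ≤ c :=
  calc (s.sum fun a p => p * g a) ≤ s.sum fun _ p => p * c :=
        Finset.sum_le_sum fun a _ => mul_le_mul_of_nonneg_left (h a) (hs.1 a)
    _ = c := hs.sum_mul_const c

lemma EUF_comm (u : A → B → ℝ) (s1 : A →₀ ℝ) (s2 : B →₀ ℝ) :
    EUF u s1 s2 = EUF (flip u) s2 s1 := by
  unfold EUF
  rw [Finsupp.sum_comm]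
  simp only [flip, mul_comm]

lemma EUF_single_right (u : A → B → ℝ) (s1 : A →₀ ℝ) (b : B) :
    EUF u s1 (single b 1) = s1.sum fun a p => p * u a b := by
  simp [EUF, sum_single_index]

lemma EUF_single_single (u : A → B → ℝ) (a : A) (b : B) :
    EUF u (single a 1) (single b 1) = u a b := by
  simp [EUF_single_right, sum_single_index]

lemma EUF_eq_sum_single_right (u : A → B → ℝ) (s1 : A →₀ ℝ) (s2 : B →₀ ℝ) :
    EUF u s1 s2 = s2.sum fun b q => q * EUF u s1 (single b 1) := by
  simp only [EUF_single_right, Finsupp.mul_sum]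
  unfold EUF
  rw [Finsupp.sum_comm]
  simp only [mul_left_comm, mul_assoc]

lemma EUF_le_of_forall_single_right {u : A → B → ℝ} {s1 : A →₀ ℝ} {s2 : B →₀ ℝ}
    (h2 : IsMixedF s2) {c : ℝ} (h : ∀ b, EUF u s1 (single b 1) ≤ c) : EUF u s1 s2 ≤ c := by
  rw [EUF_eq_sum_single_right]
  exact h2.sum_mul_le h

lemma EUF_le_of_forall_le {u : A → B → ℝ} {s1 : A →₀ ℝ} {s2 : B →₀ ℝ}
    (h1 : IsMixedF s1) (h2 : IsMixedF s2) {c : ℝ} (h : ∀ a b, u a b ≤ c) :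
    EUF u s1 s2 ≤ c :=
  EUF_le_of_forall_single_right h2 fun b => by
    rw [EUF_single_right]; exact h1.sum_mul_le fun a => h a b

lemma EUF_add (u v : A → B → ℝ) (s1 : A →₀ ℝ) (s2 : B →₀ ℝ) :
    EUF (u + v) s1 s2 = EUF u s1 s2 + EUF v s1 s2 := by
  simp only [EUF, Pi.add_apply, mul_add, sum_add]

lemma EUF_neg (u : A → B → ℝ) (s1 : A →₀ ℝ) (s2 : B →₀ ℝ) :
    EUF (-u) s1 s2 = -EUF u s1 s2 := by
  simp only [EUF, Pi.neg_apply, mul_neg, sum_neg]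

lemma le_EUF_of_forall_le {u : A → B → ℝ} {s1 : A →₀ ℝ} {s2 : B →₀ ℝ}
    (h1 : IsMixedF s1) (h2 : IsMixedF s2) {c : ℝ} (h : ∀ a b, c ≤ u a b) :
    c ≤ EUF u s1 s2 := by
  have := EUF_le_of_forall_le (u := -u) h1 h2 fun a b => neg_le_neg (h a b)
  rw [EUF_neg] at this
  linarith

lemma EUF_mapDomain_left (f : A → X) (u : X → B → ℝ) (s1 : A →₀ ℝ) (s2 : B →₀ ℝ) :
    EUF u (s1.mapDomain f) s2 = EUF (fun a b => u (f a) b) s1 s2 := by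
  unfold EUF
  rw [sum_mapDomain_index (by simp) (by simp [add_mul, sum_add])]

lemma EUF_mapDomain_right (f : B → Y) (u : A → Y → ℝ) (s1 : A →₀ ℝ) (s2 : B →₀ ℝ) :
    EUF u s1 (s2.mapDomain f) = EUF (fun a b => u a (f b)) s1 s2 := by
  rw [EUF_comm, EUF_mapDomain_left, EUF_comm]
  rfl

end MixedStrategies

section Games

variable {A B X Y : Type}

lemma isBR1F_iff_isBR2F_flip (u : A → B → ℝ) (s2 : B →₀ ℝ) (s1 : A →₀ ℝ) :
    IsBR1F u s2 s1 ↔ IsBR2F (flip u) s2 s1 := by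
  simp only [IsBR1F, IsBR2F, EUF_comm u _ s2]

lemma BU2F_eq_BU1F_flip (v1 v2 : X → Y → ℝ) : BU2F v1 v2 = BU1F (flip v2) (flip v1) := by
  simp only [BU2F, BU1F, isBR1F_iff_isBR2F_flip, EUF_comm v2]
  congr 1
  ext x
  exact exists_comm

lemma mm1F_eq_mm2F_flip (u : A → B → ℝ) : mm1F u = mm2F (flip u) := by
  simp only [mm1F, mm2F, EUF_comm u]

lemma EUF_add_EUF_le {v1 v2 : X → Y → ℝ} {M : ℝ} (hsum : ∀ x y, v1 x y + v2 x y ≤ M)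
    {s1 : X →₀ ℝ} {s2 : Y →₀ ℝ} (h1 : IsMixedF s1) (h2 : IsMixedF s2) :
    EUF v1 s1 s2 + EUF v2 s1 s2 ≤ M := by
  rw [← EUF_add]
  exact EUF_le_of_forall_le h1 h2 hsum

lemma IsAlphaPCEF.add_le {v1 v2 : X → Y → ℝ} {M α : ℝ} (hsum : ∀ x y, v1 x y + v2 x y ≤ M)
    {s : (X →₀ ℝ) × (Y →₀ ℝ)} (h : IsAlphaPCEF v1 v2 α s) :
    α + BU1F v1 v2 + (α + BU2F v1 v2) ≤ M :=
  (add_le_add h.2.2.1 h.2.2.2).trans (EUF_add_EUF_le hsum h.1 h.2.1)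

lemma bddAbove_EUF_right [Finite A] [Finite B] (u : A → B → ℝ) (s1 : A →₀ ℝ)
    (h1 : IsMixedF s1) : BddAbove {y | ∃ s2, IsMixedF s2 ∧ y = EUF u s1 s2} := by
  obtain ⟨c, hc⟩ := Finite.exists_le (Function.uncurry u)
  exact ⟨c, by rintro _ ⟨s2, h2, rfl⟩; exact EUF_le_of_forall_le h1 h2 fun a b => hc (a, b)⟩

lemma mm2F_le [Finite A] [Finite B] [Nonempty B] {u : A → B → ℝ} {s1 : A →₀ ℝ}
    (h1 : IsMixedF s1) {c : ℝ} (h : ∀ s2, IsMixedF s2 → EUF u s1 s2 ≤ c) : mm2F u ≤ c := by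
  obtain ⟨c', hc'⟩ := Finite.exists_ge (Function.uncurry u)
  have hbdd : BddBelow {x | ∃ s1, IsMixedF s1 ∧
      x = sSup {y | ∃ s2, IsMixedF s2 ∧ y = EUF u s1 s2}} := by
    refine ⟨c', ?_⟩
    rintro _ ⟨t1, ht1, rfl⟩
    let b : B := Classical.arbitrary B
    refine le_csSup_of_le (bddAbove_EUF_right u t1 ht1) ⟨_, isMixedF_single b, rfl⟩ ?_
    exact le_EUF_of_forall_le ht1 (isMixedF_single b) fun a b => hc' (a, b)
  refine csInf_le_of_le hbdd ⟨s1, h1, rfl⟩ (csSup_le ?_ ?_)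
  · exact ⟨_, _, isMixedF_single (Classical.arbitrary B), rfl⟩
  · rintro _ ⟨s2, h2, rfl⟩
    exact h s2 h2

lemma exists_forall_EUF_le_mm2F_add [Finite A] [Finite B] [Nonempty A] (u : A → B → ℝ)
    {ε : ℝ} (hε : 0 < ε) :
    ∃ s1, IsMixedF s1 ∧ ∀ s2, IsMixedF s2 → EUF u s1 s2 ≤ mm2F u + ε := by
  have hne : {x | ∃ s1, IsMixedF s1 ∧
      x = sSup {y | ∃ s2, IsMixedF s2 ∧ y = EUF u s1 s2}}.Nonempty :=
    ⟨_, _, isMixedF_single (Classical.arbitrary A), rfl⟩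
  obtain ⟨_, ⟨s1, h1, rfl⟩, hlt⟩ := Real.lt_sInf_add_pos hne hε
  exact ⟨s1, h1, fun s2 h2 => (le_csSup (bddAbove_EUF_right u s1 h1) ⟨s2, h2, rfl⟩).trans hlt.le⟩

end Games

section Deals

variable {A B X Y : Type}

lemma mm2F_le_EUF_of_isBR2F [Finite A] [Finite B] [Nonempty B] {v2 : X → Y → ℝ}
    {w : A → B → ℝ} {π : X → A} {ι : B → Y} (hopt : ∀ x b, v2 x (ι b) = w (π x) b)
    {s1 : X →₀ ℝ} {s2 : Y →₀ ℝ} (h1 : IsMixedF s1) (hbr : IsBR2F v2 s1 s2) :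
    mm2F w ≤ EUF v2 s1 s2 :=
  mm2F_le (h1.mapDomain π) fun t ht => by
    have hrevert : EUF w (s1.mapDomain π) t = EUF v2 s1 (t.mapDomain ι) := by
      simp only [EUF_mapDomain_left, EUF_mapDomain_right, hopt]
    rw [hrevert]
    exact hbr.2 _ (ht.mapDomain ι)

lemma isBR2F_of_deal {v2 : X → Y → ℝ} {w : A → B → ℝ} {ρ : Y → B} {f : A → X} {y₀ : Y}
    {K : ℝ} (hy₀ : ∀ a, v2 (f a) y₀ = K)
    (hcases : ∀ y, (∀ a, v2 (f a) y = K) ∨ ∀ a, v2 (f a) y = w a (ρ y))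
    {s : A →₀ ℝ} (hs : IsMixedF s) (hK : ∀ t, IsMixedF t → EUF w s t ≤ K) :
    IsBR2F v2 (s.mapDomain f) (single y₀ 1) := by
  have hval : ∀ y, (∀ a, v2 (f a) y = K) → EUF v2 (s.mapDomain f) (single y 1) = K :=
    fun y hy => by
      rw [EUF_mapDomain_left, EUF_single_right]
      simp only [hy]
      exact hs.sum_mul_const K
  refine ⟨isMixedF_single y₀, fun t ht => ?_⟩
  rw [hval y₀ hy₀]
  refine EUF_le_of_forall_single_right ht fun y => ?_
  rcases hcases y with hy | hy
  · exact (hval y hy).le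
  · calc EUF v2 (s.mapDomain f) (single y 1) = EUF w s (single (ρ y) 1) := by
          rw [EUF_mapDomain_left, EUF_single_right, EUF_single_right]
          simp only [hy]
      _ ≤ K := hK _ (isMixedF_single _)

/-- `hopt`: player 2 can always fall back on the base game `w`; `hdeal`: player 1 can offer any
split `(M - K, K)`, which player 2 can only decline into `w` against player 1's backup action. -/
theorem BU1F_eq_of_deals [Finite A] [Finite B] [Nonempty A] [Nonempty B]
    {v1 v2 : X → Y → ℝ} {w : A → B → ℝ} {M : ℝ} (hsum : ∀ x y, v1 x y + v2 x y ≤ M)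
    {π : X → A} {ι : B → Y} (hopt : ∀ x b, v2 x (ι b) = w (π x) b) (ρ : Y → B)
    (hdeal : ∀ K, ∃ (f : A → X) (y₀ : Y), (∀ a, v1 (f a) y₀ = M - K) ∧
      (∀ a, v2 (f a) y₀ = K) ∧ ∀ y, (∀ a, v2 (f a) y = K) ∨ ∀ a, v2 (f a) y = w a (ρ y)) :
    BU1F v1 v2 = M - mm2F w := by
  unfold BU1F
  set S := {x | ∃ s1 s2, IsMixedF s1 ∧ IsBR2F v2 s1 s2 ∧ x = EUF v1 s1 s2}
  have hle : ∀ x ∈ S, x ≤ M - mm2F w := by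
    rintro _ ⟨s1, s2, h1, hbr, rfl⟩
    have := EUF_add_EUF_le hsum h1 hbr.1
    have := mm2F_le_EUF_of_isBR2F hopt h1 hbr
    linarith
  have hmem : ∀ ε > 0, M - (mm2F w + ε) ∈ S := fun ε hε => by
    obtain ⟨s, hs, hK⟩ := exists_forall_EUF_le_mm2F_add w hε
    obtain ⟨f, y₀, hv1, hv2, hcases⟩ := hdeal (mm2F w + ε)
    refine ⟨_, _, hs.mapDomain f, isBR2F_of_deal hv2 hcases hs hK, ?_⟩
    rw [EUF_mapDomain_left, EUF_single_right]
    simp only [hv1]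
    exact (hs.sum_mul_const _).symm
  refine le_antisymm (csSup_le ⟨_, hmem 1 one_pos⟩ hle) (le_of_forall_pos_le_add fun ε hε => ?_)
  have := le_csSup ⟨_, hle⟩ (hmem ε hε)
  linarith

end Deals

section SidePayments

variable {A1 A2 : Type}

def SPAct.backup {Ai : Type} : SPAct A1 A2 Ai → Ai := Sum.elim id fun p => p.2.2

lemma uStar1_inl_left (u1 : A1 → A2 → ℝ) (a : A1) (y : SPAct A1 A2 A2) :
    uStar1 u1 (Sum.inl a) y = u1 a y.backup := by
  rcases y with b | ⟨d, r, b⟩ <;> rfl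

lemma uStar2_inl_right (u2 : A1 → A2 → ℝ) (x : SPAct A1 A2 A1) (b : A2) :
    uStar2 u2 x (Sum.inl b) = u2 x.backup b := by
  rcases x with a | ⟨d, r, a⟩ <;> rfl

lemma uStar1_deal_self (u1 : A1 → A2 → ℝ) (d : A1 × A2) (r : ℝ) (a : A1) (b : A2) :
    uStar1 u1 (Sum.inr (d, r, a)) (Sum.inr (d, r, b)) = u1 d.1 d.2 - r := by
  simp [uStar1]

lemma uStar2_deal_self (u2 : A1 → A2 → ℝ) (d : A1 × A2) (r : ℝ) (a : A1) (b : A2) :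
    uStar2 u2 (Sum.inr (d, r, a)) (Sum.inr (d, r, b)) = u2 d.1 d.2 + r := by
  simp [uStar2]

lemma uStar1_deal_cases (u1 : A1 → A2 → ℝ) (d : A1 × A2) (r : ℝ) (x : SPAct A1 A2 A1) :
    (∀ b, uStar1 u1 x (Sum.inr (d, r, b)) = u1 d.1 d.2 - r) ∨
      ∀ b, uStar1 u1 x (Sum.inr (d, r, b)) = u1 x.backup b := by
  rcases x with a | ⟨d', r', a⟩
  · exact Or.inr fun b => rfl
  by_cases h : d' = d ∧ r' = r
  · obtain ⟨rfl, rfl⟩ := h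
    exact Or.inl fun b => uStar1_deal_self u1 d' r' a b
  · exact Or.inr fun b => if_neg h

lemma uStar2_deal_cases (u2 : A1 → A2 → ℝ) (d : A1 × A2) (r : ℝ) (y : SPAct A1 A2 A2) :
    (∀ a, uStar2 u2 (Sum.inr (d, r, a)) y = u2 d.1 d.2 + r) ∨
      ∀ a, uStar2 u2 (Sum.inr (d, r, a)) y = u2 a y.backup := by
  rcases y with b | ⟨d', r', b⟩
  · exact Or.inr fun a => rfl
  by_cases h : d = d' ∧ r = r'
  · obtain ⟨rfl, rfl⟩ := h
    exact Or.inl fun a => uStar2_deal_self u2 d r a b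
  · exact Or.inr fun a => if_neg h

variable [Finite A1] [Finite A2]

lemma le_MSWF (u1 u2 : A1 → A2 → ℝ) (a : A1) (b : A2) : u1 a b + u2 a b ≤ MSWF u1 u2 := by
  refine le_csSup ?_ ⟨a, b, rfl⟩
  obtain ⟨c, hc⟩ := Finite.exists_le (Function.uncurry (u1 + u2))
  exact ⟨c, by rintro _ ⟨a, b, rfl⟩; exact hc (a, b)⟩

lemma exists_MSWF_eq [Nonempty A1] [Nonempty A2] (u1 u2 : A1 → A2 → ℝ) :
    ∃ a b, MSWF u1 u2 = u1 a b + u2 a b := by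
  have hrange : {x | ∃ a b, x = u1 a b + u2 a b} =
      Set.range fun p : A1 × A2 => u1 p.1 p.2 + u2 p.1 p.2 := by
    ext; simp [eq_comm]
  obtain ⟨⟨a, b⟩, hab⟩ := (Set.range_nonempty _).csSup_mem (Set.finite_range
    fun p : A1 × A2 => u1 p.1 p.2 + u2 p.1 p.2)
  exact ⟨a, b, by rw [MSWF, hrange, ← hab]⟩

lemma uStar1_add_uStar2_le (u1 u2 : A1 → A2 → ℝ) (x : SPAct A1 A2 A1) (y : SPAct A1 A2 A2) :
    uStar1 u1 x y + uStar2 u2 x y ≤ MSWF u1 u2 := by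
  rcases x with a | ⟨d, r, a⟩ <;> rcases y with b | ⟨d', r', b⟩
  case inr.inr =>
    by_cases h : d = d' ∧ r = r'
    · obtain ⟨rfl, rfl⟩ := h
      rw [uStar1_deal_self, uStar2_deal_self]
      linarith [le_MSWF u1 u2 d.1 d.2]
    · simp only [uStar1, uStar2, if_neg h]
      exact le_MSWF u1 u2 a b
  all_goals exact le_MSWF u1 u2 _ _

variable [Nonempty A1] [Nonempty A2]

theorem BU1F_uStar (u1 u2 : A1 → A2 → ℝ) :
    BU1F (uStar1 u1) (uStar2 u2) = MSWF u1 u2 - mm2F u2 := by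
  obtain ⟨a, b, hab⟩ := exists_MSWF_eq u1 u2
  refine BU1F_eq_of_deals (uStar1_add_uStar2_le u1 u2) (uStar2_inl_right u2) SPAct.backup
    fun K => ⟨fun c => Sum.inr ((a, b), K - u2 a b, c), Sum.inr ((a, b), K - u2 a b, b),
      fun c => ?_, fun c => ?_, fun y => ?_⟩
  · rw [uStar1_deal_self, hab]; ring
  · rw [uStar2_deal_self]; ring
  · refine (uStar2_deal_cases u2 (a, b) (K - u2 a b) y).imp (fun h c => ?_) id
    rw [h]; ring

theorem BU2F_uStar (u1 u2 : A1 → A2 → ℝ) :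
    BU2F (uStar1 u1) (uStar2 u2) = MSWF u1 u2 - mm1F u1 := by
  obtain ⟨a, b, hab⟩ := exists_MSWF_eq u1 u2
  rw [BU2F_eq_BU1F_flip, mm1F_eq_mm2F_flip]
  refine BU1F_eq_of_deals (fun y x => (add_comm _ _).trans_le (uStar1_add_uStar2_le u1 u2 x y))
    (ι := Sum.inl) (fun y a => uStar1_inl_left u1 a y) SPAct.backup
    fun K => ⟨fun c => Sum.inr ((a, b), u1 a b - K, c), Sum.inr ((a, b), u1 a b - K, a),
      fun c => ?_, fun c => ?_, fun x => ?_⟩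
  · simp only [flip]; rw [uStar2_deal_self, hab]; ring
  · simp only [flip]; rw [uStar1_deal_self]; ring
  · refine (uStar1_deal_cases u1 (a, b) (u1 a b - K) x).imp (fun h c => ?_) id
    simp only [flip]; rw [h]; ring

end SidePayments

/-- the side-payment extension `G*` has an M-PCE, and every M-PCE of
`G*` has the unique value
`((MSW(G)+mm1(G)−mm2(G))/2, (MSW(G)−mm1(G)+mm2(G))/2)`. -/
theorem sidePayment_mpce_value {A1 A2 : Type} [Fintype A1] [Fintype A2]
    [Nonempty A1] [Nonempty A2] (u1 u2 : A1 → A2 → ℝ) :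
    (∃ s, IsMPCEF (uStar1 u1) (uStar2 u2) s) ∧
    ∀ s, IsMPCEF (uStar1 u1) (uStar2 u2) s →
      EUF (uStar1 u1) s.1 s.2 = (MSWF u1 u2 + mm1F u1 - mm2F u2) / 2 ∧
      EUF (uStar2 u2) s.1 s.2 = (MSWF u1 u2 - mm1F u1 + mm2F u2) / 2 := by
  have hBU1 := BU1F_uStar u1 u2
  have hBU2 := BU2F_uStar u1 u2
  have hsum := uStar1_add_uStar2_le u1 u2
  set αmax := (mm1F u1 + mm2F u2 - MSWF u1 u2) / 2 with hαmax
  have hmax : ∀ α s, IsAlphaPCEF (uStar1 u1) (uStar2 u2) α s → α ≤ αmax := fun α s h => by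
    linarith [h.add_le hsum]
  obtain ⟨a, b, hab⟩ := exists_MSWF_eq u1 u2
  set r := (MSWF u1 u2 - mm1F u1 + mm2F u2) / 2 - u2 a b with hr
  have hPCE : IsAlphaPCEF (uStar1 u1) (uStar2 u2) αmax
      (single (Sum.inr ((a, b), r, a)) 1,
        single (Sum.inr ((a, b), r, b)) 1) := by
    refine ⟨isMixedF_single _, isMixedF_single _, ?_, ?_⟩ <;>
      refine le_of_le_of_eq ?_ (EUF_single_single _ _ _).symm
    · rw [uStar1_deal_self]; linarith
    · rw [uStar2_deal_self]; linarith
  refine ⟨⟨_, αmax, hPCE, hmax⟩, fun s ⟨α, hα, hαmax_le⟩ => ?_⟩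
  have hα_eq : α = αmax := le_antisymm (hmax α s hα) (hαmax_le _ _ hPCE)
  have := EUF_add_EUF_le hsum hα.1 hα.2.1
  obtain ⟨-, -, h1, h2⟩ := hα
  constructor <;> linarith
end
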